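/- In QHC, ⊢ ∇(!p ∨ !¬p) → (¬!¬p → !p): provable decidability of a proposition implies its stability. -/

import Mathlib

/- Problem (intuitionistic) formulas and proposition (classical) formulas of QHC. -/
mutual
inductive PF : Type
  | var : Nat → PF
  | bot : PF
  | and : PF → PF → PF
  | or : PF → PF → PF
  | imp : PF → PF → PF
  | bang : CF → PF
inductive CF : Type
  | var : Nat → CF
  | fls : CF
  | and : CF → CF → CF
  | or : CF → CF → CF
  | imp : CF → CF → CF
  | quest : PF → CF
end

def PF.neg (α : PF) : PF := α.imp PF.bot
def CF.neg (p : CF) : CF := p.imp CF.fls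
def PF.iff (α β : PF) : PF := (α.imp β).and (β.imp α)
def CF.iff (p q : CF) : CF := (p.imp q).and (q.imp p)
def CF.box (p : CF) : CF := CF.quest (PF.bang p)
def PF.nabla (α : PF) : PF := PF.bang (CF.quest α)

/- Derivability in QHC, parameterized by a set `Ax` of extra problem axioms
(used to treat the axiom ¬!0 and its variants uniformly). Intuitionistic logic
on problems, classical logic on propositions, the rules α ⊢ ?α and p ⊢ !p, and
the mixed axioms ?!p → p, α → !?α, !(p→q) → (!p → !q), ?(α→β) → (?α → ?β). -/
mutual
inductive ProvP (Ax : PF → Prop) : PF → Prop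
  | axm {α} : Ax α → ProvP Ax α
  | mp {α β} : ProvP Ax (α.imp β) → ProvP Ax α → ProvP Ax β
  | ak (α β : PF) : ProvP Ax (α.imp (β.imp α))
  | as (α β γ : PF) : ProvP Ax ((α.imp (β.imp γ)).imp ((α.imp β).imp (α.imp γ)))
  | andI (α β : PF) : ProvP Ax (α.imp (β.imp (α.and β)))
  | andE1 (α β : PF) : ProvP Ax ((α.and β).imp α)
  | andE2 (α β : PF) : ProvP Ax ((α.and β).imp β)
  | orI1 (α β : PF) : ProvP Ax (α.imp (α.or β))
  | orI2 (α β : PF) : ProvP Ax (β.imp (α.or β))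
  | orE (α β γ : PF) : ProvP Ax ((α.imp γ).imp ((β.imp γ).imp ((α.or β).imp γ)))
  | exf (α : PF) : ProvP Ax (PF.bot.imp α)
  | bangIntro {p} : ProvC Ax p → ProvP Ax (PF.bang p)
  | bangImp (p q : CF) : ProvP Ax ((PF.bang (p.imp q)).imp ((PF.bang p).imp (PF.bang q)))
  | bangQuest (α : PF) : ProvP Ax (α.imp (PF.bang (CF.quest α)))
inductive ProvC (Ax : PF → Prop) : CF → Prop
  | mp {p q} : ProvC Ax (p.imp q) → ProvC Ax p → ProvC Ax q
  | ak (p q : CF) : ProvC Ax (p.imp (q.imp p))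
  | as (p q r : CF) : ProvC Ax ((p.imp (q.imp r)).imp ((p.imp q).imp (p.imp r)))
  | andI (p q : CF) : ProvC Ax (p.imp (q.imp (p.and q)))
  | andE1 (p q : CF) : ProvC Ax ((p.and q).imp p)
  | andE2 (p q : CF) : ProvC Ax ((p.and q).imp q)
  | orI1 (p q : CF) : ProvC Ax (p.imp (p.or q))
  | orI2 (p q : CF) : ProvC Ax (q.imp (p.or q))
  | orE (p q r : CF) : ProvC Ax ((p.imp r).imp ((q.imp r).imp ((p.or q).imp r)))
  | exf (p : CF) : ProvC Ax (CF.fls.imp p)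
  | lem (p : CF) : ProvC Ax (p.or (p.imp CF.fls))
  | questIntro {α} : ProvP Ax α → ProvC Ax (CF.quest α)
  | questImp (α β : PF) : ProvC Ax ((CF.quest (α.imp β)).imp ((CF.quest α).imp (CF.quest β)))
  | questBang (p : CF) : ProvC Ax ((CF.quest (PF.bang p)).imp p)
end

/-- The axiom (!⊥): ¬!0. -/
def QHCAx : PF → Prop := fun α => α = (PF.bang CF.fls).imp PF.bot

/-- Derivability of a problem in QHC. -/
def PrvP (α : PF) : Prop := ProvP QHCAx α
/-- Derivability of a proposition in QHC. -/
def PrvC (p : CF) : Prop := ProvC QHCAx p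

/-!
Under `∇` one cannot case-split on `!p ∨ !¬p` directly. Instead the intuitionistic tautology
`α ∨ β → (¬β → α)` is pushed under `∇`, which distributes over implication; the hypothesis `¬!¬p`
is lifted into `∇` by `γ → ∇γ`, and the resulting `∇!p` is brought back down to `!p` by `?!p → p`.
-/

namespace ProvP

variable {Ax : PF → Prop} {α β γ α' γ' : PF}

theorem imp_intro (α : PF) (h : ProvP Ax β) : ProvP Ax (α.imp β) :=
  mp (ak β α) h

theorem mp_imp (h₁ : ProvP Ax (α.imp (β.imp γ))) (h₂ : ProvP Ax (α.imp β)) :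
    ProvP Ax (α.imp γ) :=
  mp (mp (as α β γ) h₁) h₂

theorem imp_trans (h₁ : ProvP Ax (α.imp β)) (h₂ : ProvP Ax (β.imp γ)) : ProvP Ax (α.imp γ) :=
  mp_imp (imp_intro α h₂) h₁

theorem imp_swap (h : ProvP Ax (α.imp (β.imp γ))) : ProvP Ax (β.imp (α.imp γ)) :=
  mp_imp (imp_intro β (mp (as α β γ) h)) (ak β α)

theorem imp_imp_mono (h : ProvP Ax (α.imp (β.imp γ))) (hβ : ProvP Ax (α'.imp β))
    (hγ : ProvP Ax (γ.imp γ')) : ProvP Ax (α.imp (α'.imp γ')) :=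
  imp_trans (imp_swap (imp_trans hβ (imp_swap h))) (mp (as α' γ γ') (imp_intro α' hγ))

theorem neg_imp (α β : PF) : ProvP Ax ((PF.neg α).imp (α.imp β)) :=
  mp (as α PF.bot β) (imp_intro α (exf β))

theorem or_imp_neg_imp (α β : PF) : ProvP Ax ((α.or β).imp ((PF.neg β).imp α)) :=
  mp (mp (orE α β _) (ak α (PF.neg β))) (imp_swap (neg_imp β α))

theorem nabla_mono (h : ProvP Ax (α.imp β)) : ProvP Ax ((PF.nabla α).imp (PF.nabla β)) :=
  mp (bangImp _ _) (bangIntro (ProvC.mp (ProvC.questImp α β) (ProvC.questIntro h)))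

theorem nabla_imp (α β : PF) :
    ProvP Ax ((PF.nabla (α.imp β)).imp ((PF.nabla α).imp (PF.nabla β))) :=
  imp_trans (mp (bangImp _ _) (bangIntro (ProvC.questImp α β))) (bangImp _ _)

theorem nabla_bang (p : CF) : ProvP Ax ((PF.nabla (PF.bang p)).imp (PF.bang p)) :=
  mp (bangImp _ p) (bangIntro (ProvC.questBang p))

theorem nabla_or_imp_neg_imp (hα : ProvP Ax ((PF.nabla α).imp α)) :
    ProvP Ax ((PF.nabla (α.or β)).imp ((PF.neg β).imp α)) :=
  imp_imp_mono (imp_trans (nabla_mono (or_imp_neg_imp α β)) (nabla_imp _ α))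
    (bangQuest _) hα

end ProvP

theorem qhc_provable_decidability_implies_stability (p : CF) :
    PrvP ((PF.nabla ((PF.bang p).or (PF.bang (CF.neg p)))).imp
      ((PF.neg (PF.bang (CF.neg p))).imp (PF.bang p))) :=
  ProvP.nabla_or_imp_neg_imp (ProvP.nabla_bang p)
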